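/- Infinite-horizon threshold characterization: for the discounted (factor 0 < γ ≤ 1, γ < 1 when needed for convergence) two-network switching problem with stationary rewards f (current) and g (other) and switching cost c ≥ 0, the stationary optimal policy is: switch iff f − g ≤ γΔ − c, where Δ is the expected difference of optimal values at the next state between the two network-connection states; moreover |Δ| ≤ c. -/

import Mathlib

/-!
At the other network `σ x` the Bellman maximum is attained either by staying, and then
`V x ≥ V (σ x) - c` because switching from `x` to `σ x` is one of the options at `x`, or by
switching to `x`, and then `V (σ x) ≤ V x - c` because it pays `c` for a one-step outcome that
`V x` dominates. Hence `V (σ x) - V x ≤ c`, and symmetrically. The threshold rule is a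
rearrangement of the comparison of the two branches.
-/

section Switching

variable {α : Type*} {σ : α → α} {r V : α → ℝ} {γ c : ℝ}

theorem value_sub_le_switchCost (hσ : Function.Involutive σ) (hc : 0 ≤ c)
    (hV : ∀ x, V x = max (r x + γ * V x) (r (σ x) - c + γ * V (σ x))) (x : α) :
    V (σ x) - V x ≤ c := by
  have hstay : r x + γ * V x ≤ V x := (le_max_left _ _).trans_eq (hV x).symm
  have hswitch : r (σ x) - c + γ * V (σ x) ≤ V x := (le_max_right _ _).trans_eq (hV x).symm
  have hVσ := hV (σ x)
  rw [hσ x] at hVσ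
  rcases max_choice (r (σ x) + γ * V (σ x)) (r x - c + γ * V x) with h | h <;>
    rw [h] at hVσ <;> linarith

theorem abs_value_sub_le_switchCost (hσ : Function.Involutive σ) (hc : 0 ≤ c)
    (hV : ∀ x, V x = max (r x + γ * V x) (r (σ x) - c + γ * V (σ x))) (x : α) :
    |V (σ x) - V x| ≤ c := by
  have hback := value_sub_le_switchCost hσ hc hV (σ x)
  rw [hσ x] at hback
  exact abs_le.2 ⟨by linarith, value_sub_le_switchCost hσ hc hV x⟩

end Switching

theorem infinite_horizon_threshold_general (γ c : ℝ) (hc : 0 ≤ c)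
    (r V : Bool → ℝ)
    (hV : ∀ x, V x = max (r x + γ * V x) (r (!x) - c + γ * V (!x))) :
    (∀ x, (r x + γ * V x ≤ r (!x) - c + γ * V (!x)) ↔
        r x - r (!x) ≤ γ * (V (!x) - V x) - c) ∧
    (∀ x, |V (!x) - V x| ≤ c) :=
  ⟨fun _ => by constructor <;> intro h <;> linarith,
    abs_value_sub_le_switchCost Bool.involutive_not hc hV⟩

/-- Infinite-horizon threshold characterization.  For the stationary
discounted two-network switching problem (network encoded as a `Bool`, per-step reward
`r x`, switching cost `c ≥ 0`, discount `γ ∈ (0,1)`), with `V` the optimal value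
function (a Bellman fixed point), switching from network `x` is optimal iff
`r x - r (!x) ≤ γ·Δ - c` where `Δ = V (!x) - V x`; moreover `|Δ| ≤ c`. -/
theorem infinite_horizon_threshold (γ c : ℝ) (hγ0 : 0 < γ) (hγ1 : γ < 1) (hc : 0 ≤ c)
    (r V : Bool → ℝ)
    (hV : ∀ x, V x = max (r x + γ * V x) (r (!x) - c + γ * V (!x))) :
    (∀ x, (r x + γ * V x ≤ r (!x) - c + γ * V (!x)) ↔
        r x - r (!x) ≤ γ * (V (!x) - V x) - c) ∧
    (∀ x, |V (!x) - V x| ≤ c) :=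
  infinite_horizon_threshold_general γ c hc r V hV
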